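/- Let (C_β) be a global square sequence with associated function n. For every natural number k, every closed unbounded class C of ordinals, and all ordinals δ and η, the class C ∩ {β : β is a singular limit ordinal and n(β) ≥ k} contains a closed subset of order type at least δ all of whose elements are greater than η. -/

import Mathlib

open Set

/-- The order type of a set of ordinals: the unique ordinal `o` such that
`Set.Iio o` is order-isomorphic to `X` (or `0` if no such ordinal exists,
which can only happen for proper-class-sized `X`). -/
noncomputable def otype.{u} (X : Set Ordinal.{u}) : Ordinal.{u} :=
  sInf {o : Ordinal.{u} | Nonempty (Set.Iio o ≃o X)}

/-- A set (or class) of ordinals is closed if it contains the supremum of every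
nonempty bounded-above subset of itself. -/
def IsClosedSet (C : Set Ordinal) : Prop :=
  ∀ s : Set Ordinal, s ⊆ C → s.Nonempty → BddAbove s → sSup s ∈ C

/-- `limPts X` is the class of limit ordinals `γ` with `sup (X ∩ γ) = γ`. -/
def limPts (X : Set Ordinal) : Set Ordinal :=
  {γ | Order.IsSuccLimit γ ∧ sSup (X ∩ Set.Iio γ) = γ}

/-- An ordinal is singular if it is a limit ordinal whose cofinality is smaller
than itself. -/
def IsSing (β : Ordinal) : Prop := Order.IsSuccLimit β ∧ β.cof.ord < β

/-- `X` is a closed unbounded subset of the ordinal `β`. -/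
def IsClubIn (X : Set Ordinal) (β : Ordinal) : Prop :=
  X ⊆ Set.Iio β ∧
    (∀ s : Set Ordinal, s ⊆ X → s.Nonempty → sSup s < β → sSup s ∈ X) ∧
    ∀ η < β, ∃ x ∈ X, η < x

/-- A global square sequence. -/
structure GlobalSquare where
  C : Ordinal → Set Ordinal
  club : ∀ β, IsSing β → IsClubIn (C β) β
  ot_lt : ∀ β, IsSing β → otype (C β) < β
  coh : ∀ β, IsSing β → ∀ γ ∈ limPts (C β), γ < β →
    IsSing γ ∧ C γ = C β ∩ Set.Iio γ

/-- `ν` is the function `n` associated to the global square sequence `S`. -/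
def IsAssocFn (S : GlobalSquare) (ν : Ordinal → ℕ) : Prop :=
  open scoped Classical in
  ∀ β, IsSing β →
    ν β = if IsSing (otype (S.C β)) then ν (otype (S.C β)) + 1 else 0

/-- Iterated cardinal successor: `succIt α k = α⁺...⁺` (`k` times). -/
noncomputable def succIt (α : Cardinal) : ℕ → Cardinal
  | 0 => α
  | k + 1 => Order.succ (succIt α k)

/-- An ordinal which is (the ordinal of) a regular cardinal. -/
def IsRegOrd (α : Ordinal) : Prop := ∃ κ : Cardinal, κ.IsRegular ∧ α = κ.ord

/-- End-extension ordering: `EndExt p q` means `p ≤ q`, i.e. `p` end-extends `q`. -/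
def EndExt (p q : Set Ordinal) : Prop :=
  q ⊆ p ∧ ∀ x ∈ p \ q, ∀ y ∈ q, y < x

/-- The class forcing associated to a square sequence with associated function `ν`
and `k ∈ ℕ`: nonempty closed bounded sets of ordinals all of whose elements are
regular cardinals or singular of `ν`-value at least `k+1`. -/
def Pforcing (ν : Ordinal → ℕ) (k : ℕ) : Set (Set Ordinal) :=
  {p | p.Nonempty ∧ IsClosedSet p ∧ BddAbove p ∧
    ∀ α ∈ p, IsRegOrd α ∨ (IsSing α ∧ k + 1 ≤ ν α)}

/-!
We show, by induction on `k`, that every club `c` in an ordinal `θ` with `cof θ > ρ^{+k}`, where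
`ρ = ℵ₀ + |δ|`, contains a closed set of order type at least `δ` consisting of singular ordinals
`x` with `n(x) ≥ k`.

For `k = 0`, enumerate `c` above `ρ` by a normal function `F`; the points `F(ω(1 + ι))`, `ι ≤ δ`,
have cofinality at most `ρ`, hence are singular. For `k + 1`, pick a limit point `β` of `c` above
`μ = ρ^{+(k+1)}` with `cof β = μ`, and let `f` enumerate `C_β`. Since `cof β > ω`, the limit
indices `ξ < ot(C_β)` with `f ξ` a limit point of `c` form a club in `ot(C_β)`, an ordinal of
cofinality `μ`; the induction hypothesis gives a closed set `E` of such indices. Coherence gives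
`C_{f ξ} = C_β ∩ f ξ`, of order type `ξ`, so `n(f ξ) = n(ξ) + 1`, and `f[E]` works.

For the theorem, apply this inside a limit point `θ` of `C ∩ (η, ∞)` of cofinality `ρ^{+(k+1)}`.
-/

open Order Ordinal Cardinal

universe u

section LimitPoints

variable {X Y : Set Ordinal.{u}} {γ : Ordinal.{u}}

theorem mem_limPts_iff : γ ∈ limPts X ↔ γ ≠ 0 ∧ ∀ a < γ, ∃ b ∈ X, a < b ∧ b < γ := by
  refine ⟨fun h => ⟨h.1.ne_bot, fun a ha => ?_⟩, fun ⟨hγ, h⟩ => ⟨?_, ?_⟩⟩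
  · rw [← h.2] at ha
    obtain ⟨b, ⟨hbX, hbγ⟩, hab⟩ := exists_lt_of_lt_csSup' ha
    exact ⟨b, hbX, hab, hbγ⟩
  · refine Ordinal.isSuccLimit_iff.2 ⟨hγ, fun a ha => ?_⟩
    obtain ⟨b, -, hab, hbγ⟩ := h a ha.lt
    exact ha.2 hab hbγ
  · refine le_antisymm (csSup_le' fun b hb => hb.2.le) (le_of_forall_lt fun a ha => ?_)
    obtain ⟨b, hbX, hab, hbγ⟩ := h a ha
    exact hab.trans_le (le_csSup ⟨γ, fun z hz => hz.2.le⟩ ⟨hbX, hbγ⟩)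

theorem limPts_mono (h : X ⊆ Y) : limPts X ⊆ limPts Y := by
  intro γ hγ
  obtain ⟨hγ0, hX⟩ := mem_limPts_iff.1 hγ
  refine mem_limPts_iff.2 ⟨hγ0, fun a ha => ?_⟩
  obtain ⟨b, hb, hab, hbγ⟩ := hX a ha
  exact ⟨b, h hb, hab, hbγ⟩

theorem isClosedSet_limPts (X : Set Ordinal.{u}) : IsClosedSet (limPts X) := by
  intro s hs hne hbdd
  by_cases hlim : IsSuccLimit (sSup s)
  · refine mem_limPts_iff.2 ⟨hlim.ne_bot, fun a ha => ?_⟩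
    obtain ⟨u, hu, hau⟩ := exists_lt_of_lt_csSup hne ha
    obtain ⟨b, hb, hab, hbu⟩ := (mem_limPts_iff.1 (hs hu)).2 a hau
    exact ⟨b, hb, hab, hbu.trans_le (le_csSup hbdd hu)⟩
  · exact hs (csSup_mem_of_not_isSuccLimit hne hbdd hlim)

theorem IsClosedSet.inter_Ioi {C : Set Ordinal.{u}} (hC : IsClosedSet C) (η : Ordinal.{u}) :
    IsClosedSet (C ∩ Ioi η) := by
  intro s hs hne hbdd
  obtain ⟨x, hx⟩ := hne
  exact ⟨hC s (fun y hy => (hs hy).1) ⟨x, hx⟩ hbdd, (hs hx).2.trans_le (le_csSup hbdd hx)⟩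

theorem IsClosedSet.isClubIn_inter_Iio {C : Set Ordinal.{u}} (hC : IsClosedSet C)
    {θ : Ordinal.{u}} (hθ : θ ∈ limPts C) : IsClubIn (C ∩ Iio θ) θ := by
  refine ⟨inter_subset_right, fun s hs hne hlt => ⟨?_, hlt⟩, fun a ha => ?_⟩
  · exact hC s (fun x hx => (hs hx).1) hne ⟨θ, fun x hx => (hs hx).2.le⟩
  · obtain ⟨b, hb, hab, hbθ⟩ := (mem_limPts_iff.1 hθ).2 a ha
    exact ⟨b, ⟨hb, hbθ⟩, hab⟩

theorem exists_mem_limPts_inter {x y : Set Ordinal.{u}} {β a : Ordinal.{u}} (hβ : ℵ₀ < β.cof)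
    (hx : β ∈ limPts x) (hy : β ∈ limPts y) (ha : a < β) :
    ∃ γ, a < γ ∧ γ < β ∧ γ ∈ limPts x ∧ γ ∈ limPts y := by
  choose! fx hfx using (mem_limPts_iff.1 hx).2
  choose! fy hfy using (mem_limPts_iff.1 hy).2
  -- alternate between points of `x` and `y`; the supremum has cofinality `ℵ₀ < cof β`
  set w : ℕ → Ordinal.{u} := fun n => (fy ∘ fx)^[n] a
  have hw_succ (n : ℕ) : w (n + 1) = fy (fx (w n)) := Function.iterate_succ_apply' _ _ _
  have hwβ (n : ℕ) : w n < β := by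
    induction n with
    | zero => exact ha
    | succ n ih => rw [hw_succ]; exact (hfy _ (hfx _ ih).2.2).2.2
  have hx_between (n : ℕ) : fx (w n) ∈ x ∧ w n < fx (w n) ∧ fx (w n) < w (n + 1) := by
    obtain ⟨hmem, hlt, hltβ⟩ := hfx _ (hwβ n)
    exact ⟨hmem, hlt, by rw [hw_succ]; exact (hfy _ hltβ).2.1⟩
  have hy_mem (n : ℕ) : w (n + 1) ∈ y := by
    rw [hw_succ]; exact (hfy _ (hfx _ (hwβ n)).2.2).1
  have hw_lt (n : ℕ) : w n < w (n + 1) := (hx_between n).2.1.trans (hx_between n).2.2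
  set γ := ⨆ n, w n
  have hw_le (n : ℕ) : w n ≤ γ := Ordinal.le_iSup w n
  have hγ0 : γ ≠ 0 := ((hw_lt 0).trans_le (hw_le 1)).ne_bot
  have hγβ : γ < β := lift_iSup_lt_of_lt_cof (by simpa using hβ) hwβ
  refine ⟨γ, (hw_lt 0).trans_le (hw_le 1), hγβ, mem_limPts_iff.2 ⟨hγ0, fun b hb => ?_⟩,
    mem_limPts_iff.2 ⟨hγ0, fun b hb => ?_⟩⟩
  · obtain ⟨n, hn⟩ := Ordinal.lt_iSup_iff.1 hb
    obtain ⟨hmem, hlt, hlt'⟩ := hx_between n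
    exact ⟨fx (w n), hmem, hn.trans hlt, hlt'.trans_le (hw_le _)⟩
  · obtain ⟨n, hn⟩ := Ordinal.lt_iSup_iff.1 hb
    exact ⟨w (n + 1), hy_mem n, hn.trans (hw_lt n), (hw_lt _).trans_le (hw_le _)⟩

end LimitPoints

section NormalFunctions

variable {f : Ordinal.{u} → Ordinal.{u}}

theorem Order.IsNormal.mem_limPts_image_Iio (hf : IsNormal f) {ξ : Ordinal.{u}}
    (hξ : IsSuccLimit ξ) : f ξ ∈ limPts (f '' Iio ξ) := by
  refine mem_limPts_iff.2 ⟨(hf.map_isSuccLimit hξ).ne_bot, fun a ha => ?_⟩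
  obtain ⟨b, hb, hab⟩ := (hf.lt_iff_exists_lt hξ).1 ha
  exact ⟨f b, mem_image_of_mem f hb, hab, hf.strictMono hb⟩

theorem Order.IsNormal.isClosedSet_image (hf : IsNormal f) {E : Set Ordinal.{u}}
    (hE : IsClosedSet E) : IsClosedSet (f '' E) := by
  intro s hs hne hbdd
  have hs_eq : f '' (E ∩ f ⁻¹' s) = s := by rw [image_inter_preimage, inter_eq_right.2 hs]
  have hne' : (E ∩ f ⁻¹' s).Nonempty := by rwa [← image_nonempty, hs_eq]
  have hbdd' : BddAbove (E ∩ f ⁻¹' s) := by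
    obtain ⟨B, hB⟩ := hbdd
    exact ⟨B, fun b hb => hf.strictMono.le_apply.trans (hB hb.2)⟩
  rw [← hs_eq, ← hf.map_sSup hne' hbdd']
  exact mem_image_of_mem f (hE _ inter_subset_left hne' hbdd')

theorem StrictMono.isSuccLimit_of_mem_limPts_range (hf : StrictMono f) {j : Ordinal.{u}}
    (h : f j ∈ limPts (range f)) : IsSuccLimit j := by
  obtain ⟨hj0, hcof⟩ := mem_limPts_iff.1 h
  refine Ordinal.isSuccLimit_iff.2 ⟨?_, fun i hij => ?_⟩
  · obtain ⟨_, ⟨r, rfl⟩, -, hr⟩ := hcof 0 (pos_iff_ne_zero.2 hj0)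
    exact ne_zero_of_lt (hf.lt_iff_lt.1 hr)
  · obtain ⟨_, ⟨r, rfl⟩, hir, hrj⟩ := hcof (f i) (hf hij.lt)
    exact hij.2 (hf.lt_iff_lt.1 hir) (hf.lt_iff_lt.1 hrj)

end NormalFunctions

theorem otype_eq_of_orderIso {X : Set Ordinal.{u}} {o : Ordinal.{u}} (e : Iio o ≃o X) :
    otype X = o := by
  have hIio {o' : Ordinal.{u}} (e' : Iio o' ≃o Iio o) : o' = o := by
    simpa [type_lt_Iio] using e'.toRelIsoLT.ordinalType_congr
  have : {o' : Ordinal.{u} | Nonempty (Iio o' ≃o X)} = {o} :=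
    eq_singleton_iff_unique_mem.2 ⟨⟨e⟩, fun o' ⟨e'⟩ => hIio (e'.trans e.symm)⟩
  rw [otype, this, csInf_singleton]

theorem otype_Iio (o : Ordinal.{u}) : otype (Iio o) = o :=
  otype_eq_of_orderIso (OrderIso.refl _)

theorem otype_image {f : Ordinal.{u} → Ordinal.{u}} (hf : StrictMono f) (E : Set Ordinal.{u}) :
    otype (f '' E) = otype E := by
  have e : E ≃o f '' E := (hf.strictMonoOn E).orderIso f E
  have : {o : Ordinal.{u} | Nonempty (Iio o ≃o f '' E)} = {o | Nonempty (Iio o ≃o E)} := by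
    ext o
    exact ⟨fun ⟨e'⟩ => ⟨e'.trans e.symm⟩, fun ⟨e'⟩ => ⟨e'.trans e⟩⟩
  rw [otype, otype, this]

theorem lt_of_card_lt_cof {ξ o : Ordinal.{u}} (h : ξ.card < o.cof) : ξ < o :=
  lt_of_not_ge fun ho => h.not_ge ((cof_le_card o).trans (card_le_card ho))

theorem le_succIt (ρ : Cardinal.{u}) (k : ℕ) : ρ ≤ succIt ρ k := by
  induction k with
  | zero => exact le_rfl
  | succ k ih => exact ih.trans (le_succ _)

/-- The normal function enumerating `c` and then the ordinals `≥ θ`; the padding makes the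
enumerated set unbounded, as `enumOrd` requires. -/
noncomputable def clubEnum (c : Set Ordinal.{u}) (θ : Ordinal.{u}) : Ordinal.{u} → Ordinal.{u} :=
  enumOrd (c ∪ Ici θ)

theorem not_bddAbove_union_Ici (c : Set Ordinal.{u}) (θ : Ordinal.{u}) :
    ¬ BddAbove (c ∪ Ici θ) :=
  fun h => not_bddAbove_Ici θ (h.mono subset_union_right)

namespace IsClubIn

variable {c : Set Ordinal.{u}} {θ ξ γ : Ordinal.{u}}

theorem isClosedSet_union_Ici (hc : IsClubIn c θ) : IsClosedSet (c ∪ Ici θ) := by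
  intro s hs hne hbdd
  rcases le_or_gt θ (sSup s) with h | h
  · exact Or.inr h
  · refine Or.inl (hc.2.1 s (fun x hx => ?_) hne h)
    exact (hs hx).resolve_right ((le_csSup hbdd hx).trans_lt h).not_ge

theorem isNormal_clubEnum (hc : IsClubIn c θ) : IsNormal (clubEnum c θ) :=
  isNormal_enumOrd hc.isClosedSet_union_Ici (not_bddAbove_union_Ici c θ)

theorem clubEnum_mem (h : clubEnum c θ ξ < θ) : clubEnum c θ ξ ∈ c :=
  (enumOrd_mem (not_bddAbove_union_Ici c θ) ξ).resolve_right h.not_ge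

theorem inter_Ioi (hc : IsClubIn c θ) {η : Ordinal.{u}} (hη : η < θ) :
    IsClubIn (c ∩ Ioi η) θ := by
  refine ⟨fun x hx => hc.1 hx.1, fun s hs hne hlt => ?_, fun a ha => ?_⟩
  · have hbdd : BddAbove s := ⟨θ, fun x hx => (hc.1 (hs hx).1).le⟩
    obtain ⟨x, hx⟩ := hne
    exact ⟨hc.2.1 s (fun y hy => (hs hy).1) ⟨x, hx⟩ hlt, (hs hx).2.trans_le (le_csSup hbdd hx)⟩
  · obtain ⟨x, hx, hax⟩ := hc.2.2 (max a η) (max_lt ha hη)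
    exact ⟨x, ⟨hx, (le_max_right a η).trans_lt hax⟩, (le_max_left a η).trans_lt hax⟩

theorem mem_limPts (hc : IsClubIn c θ) (hθ : IsSuccLimit θ) : θ ∈ limPts c := by
  refine mem_limPts_iff.2 ⟨hθ.ne_bot, fun a ha => ?_⟩
  obtain ⟨b, hb, hab⟩ := hc.2.2 a ha
  exact ⟨b, hb, hab, hc.1 hb⟩

theorem mem_of_mem_limPts (hc : IsClubIn c θ) (hγ : γ ∈ limPts c) (hγθ : γ < θ) : γ ∈ c := by
  have hne : (c ∩ Iio γ).Nonempty := by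
    obtain ⟨b, hb, -, hbγ⟩ := (mem_limPts_iff.1 hγ).2 0 hγ.1.bot_lt
    exact ⟨b, hb, hbγ⟩
  have := hc.2.1 _ inter_subset_left hne (hγ.2.symm ▸ hγθ)
  rwa [hγ.2] at this

theorem exists_clubEnum_eq_and_image_Iio (hc : IsClubIn c θ) :
    ∃ p, clubEnum c θ p = θ ∧ clubEnum c θ '' Iio p = c := by
  have hF := hc.isNormal_clubEnum.strictMono
  obtain ⟨p, hp⟩ := enumOrd_surjective (not_bddAbove_union_Ici c θ)
    (mem_union_right c (mem_Ici.2 le_rfl))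
  refine ⟨p, hp, Subset.antisymm ?_ fun x hx => ?_⟩
  · rintro _ ⟨j, hj, rfl⟩
    exact clubEnum_mem ((hF hj).trans_eq hp)
  · obtain ⟨j, rfl⟩ := enumOrd_surjective (not_bddAbove_union_Ici c θ) (mem_union_left _ hx)
    exact ⟨j, hF.lt_iff_lt.1 ((hc.1 hx).trans_eq hp.symm), rfl⟩

theorem otype_eq_of_image_clubEnum_Iio (hc : IsClubIn c θ) {p : Ordinal.{u}}
    (himg : clubEnum c θ '' Iio p = c) : otype c = p := by
  rw [← himg, otype_image hc.isNormal_clubEnum.strictMono, otype_Iio]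

theorem clubEnum_otype (hc : IsClubIn c θ) : clubEnum c θ (otype c) = θ := by
  obtain ⟨p, hp, himg⟩ := hc.exists_clubEnum_eq_and_image_Iio
  rwa [hc.otype_eq_of_image_clubEnum_Iio himg]

theorem image_clubEnum_Iio_otype (hc : IsClubIn c θ) : clubEnum c θ '' Iio (otype c) = c := by
  obtain ⟨p, -, himg⟩ := hc.exists_clubEnum_eq_and_image_Iio
  rwa [hc.otype_eq_of_image_clubEnum_Iio himg]

theorem subset_range_clubEnum (c : Set Ordinal.{u}) (θ : Ordinal.{u}) : c ⊆ range (clubEnum c θ) :=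
  subset_union_left.trans (range_enumOrd (not_bddAbove_union_Ici c θ)).symm.subset

theorem clubEnum_lt_iff (hc : IsClubIn c θ) : clubEnum c θ ξ < θ ↔ ξ < otype c := by
  have h := hc.isNormal_clubEnum.strictMono.lt_iff_lt (a := ξ) (b := otype c)
  rwa [hc.clubEnum_otype] at h

theorem inter_Iio_clubEnum (hc : IsClubIn c θ) (hξ : ξ ≤ otype c) :
    c ∩ Iio (clubEnum c θ ξ) = clubEnum c θ '' Iio ξ := by
  have hF := hc.isNormal_clubEnum.strictMono
  ext x
  constructor
  · rintro ⟨hx, hxξ⟩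
    obtain ⟨j, -, rfl⟩ := hc.image_clubEnum_Iio_otype.symm.subset hx
    exact ⟨j, hF.lt_iff_lt.1 hxξ, rfl⟩
  · rintro ⟨j, hj, rfl⟩
    exact ⟨hc.image_clubEnum_Iio_otype.subset ⟨j, hj.trans_le hξ, rfl⟩, hF hj⟩

theorem clubEnum_mem_limPts (hc : IsClubIn c θ) (hξ : IsSuccLimit ξ) (h : clubEnum c θ ξ < θ) :
    clubEnum c θ ξ ∈ limPts c := by
  have hF := hc.isNormal_clubEnum
  refine limPts_mono ?_ (hF.mem_limPts_image_Iio hξ)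
  rintro _ ⟨j, hj, rfl⟩
  exact clubEnum_mem ((hF.strictMono hj).trans h)

theorem exists_isSuccLimit_clubEnum_eq (hc : IsClubIn c θ) (hγ : γ ∈ limPts c) (hγθ : γ < θ) :
    ∃ j < otype c, IsSuccLimit j ∧ clubEnum c θ j = γ := by
  obtain ⟨j, hj, rfl⟩ := hc.image_clubEnum_Iio_otype.symm.subset (hc.mem_of_mem_limPts hγ hγθ)
  exact ⟨j, hj, hc.isNormal_clubEnum.strictMono.isSuccLimit_of_mem_limPts_range
    (limPts_mono (subset_range_clubEnum c θ) hγ), rfl⟩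

theorem isSuccLimit_otype (hc : IsClubIn c θ) (hθ : IsSuccLimit θ) : IsSuccLimit (otype c) := by
  have h : clubEnum c θ (otype c) ∈ limPts (range (clubEnum c θ)) := by
    rw [hc.clubEnum_otype]; exact limPts_mono (subset_range_clubEnum c θ) (hc.mem_limPts hθ)
  exact hc.isNormal_clubEnum.strictMono.isSuccLimit_of_mem_limPts_range h

theorem cof_otype (hc : IsClubIn c θ) (hθ : IsSuccLimit θ) : (otype c).cof = θ.cof := by
  conv_rhs =>
    rw [← hc.clubEnum_otype, cof_map_of_isNormal hc.isNormal_clubEnum (hc.isSuccLimit_otype hθ)]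

theorem clubEnum_lt_of_card_lt_cof (hc : IsClubIn c θ) (hθ : IsSuccLimit θ)
    (h : ξ.card < θ.cof) : clubEnum c θ ξ < θ :=
  hc.clubEnum_lt_iff.2 (lt_of_card_lt_cof (hc.cof_otype hθ ▸ h))

theorem isClubIn_setOf_clubEnum_mem_limPts {x y : Set Ordinal.{u}} {β : Ordinal.{u}}
    (hx : IsClubIn x β) (hβ : ℵ₀ < β.cof) (hy : β ∈ limPts y) :
    IsClubIn {ξ | ξ < otype x ∧ IsSuccLimit ξ ∧ clubEnum x β ξ ∈ limPts y} (otype x) := by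
  have hf := hx.isNormal_clubEnum
  refine ⟨fun ξ hξ => hξ.1, fun s hs hne hlt => ?_, fun a ha => ?_⟩
  · have hbdd : BddAbove s := ⟨otype x, fun ξ hξ => (hs hξ).1.le⟩
    by_cases hlim : IsSuccLimit (sSup s)
    · refine ⟨hlt, hlim, ?_⟩
      rw [hf.map_sSup hne hbdd]
      exact isClosedSet_limPts y _ (image_subset_iff.2 fun ξ hξ => (hs hξ).2.2) (hne.image _)
        (hf.monotone.map_bddAbove hbdd)
    · exact hs (csSup_mem_of_not_isSuccLimit hne hbdd hlim)
  · obtain ⟨γ, haγ, hγβ, hγx, hγy⟩ := exists_mem_limPts_inter hβ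
      (hx.mem_limPts (one_lt_cof_iff.1 (one_lt_aleph0.trans hβ))) hy (hx.clubEnum_lt_iff.2 ha)
    obtain ⟨j, hj, hjlim, rfl⟩ := hx.exists_isSuccLimit_clubEnum_eq hγx hγβ
    exact ⟨j, ⟨hj, hjlim, hγy⟩, hf.strictMono.lt_iff_lt.1 haγ⟩

theorem exists_mem_limPts_isSing_cof_eq (hc : IsClubIn c θ) {κ : Cardinal.{u}}
    (hκ : κ.IsRegular) (hκθ : κ < θ.cof) :
    ∃ β < θ, β ∈ limPts c ∧ IsSing β ∧ β.cof = κ := by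
  have hθ : IsSuccLimit θ := one_lt_cof_iff.1 ((one_lt_aleph0.trans_le hκ.aleph0_le).trans hκθ)
  have hc' := hc.inter_Ioi ((ord_lt_ord.2 hκθ).trans_le (ord_cof_le θ))
  have hκlim : IsSuccLimit κ.ord := isSuccLimit_ord hκ.aleph0_le
  have hlt := hc'.clubEnum_lt_of_card_lt_cof hθ (by rwa [card_ord])
  have hcof : (clubEnum (c ∩ Ioi κ.ord) θ κ.ord).cof = κ := by
    rw [cof_map_of_isNormal hc'.isNormal_clubEnum hκlim, hκ.cof_ord]
  refine ⟨_, hlt, limPts_mono inter_subset_left (hc'.clubEnum_mem_limPts hκlim hlt),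
    ⟨hc'.isNormal_clubEnum.map_isSuccLimit hκlim, ?_⟩, hcof⟩
  rw [hcof]
  exact (clubEnum_mem hlt).2

theorem exists_closed_subset_isSing (hc : IsClubIn c θ) {δ : Ordinal.{u}} {ρ : Cardinal.{u}}
    (hρ : ℵ₀ ≤ ρ) (hδ : δ.card ≤ ρ) (hρθ : ρ < θ.cof) :
    ∃ D ⊆ c, IsClosedSet D ∧ δ ≤ otype D ∧ ∀ x ∈ D, IsSing x := by
  have hθ : IsSuccLimit θ := one_lt_cof_iff.1 ((one_lt_aleph0.trans_le hρ).trans hρθ)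
  have hc' := hc.inter_Ioi ((ord_lt_ord.2 hρθ).trans_le (ord_cof_le θ))
  have hF := hc'.isNormal_clubEnum
  set g : Ordinal.{u} → Ordinal.{u} := fun ι => ω * (1 + ι)
  have hg : IsNormal g := (isNormal_mul_right omega0_pos).comp (isNormal_add_right 1)
  have hg_lim (ι : Ordinal.{u}) : IsSuccLimit (g ι) :=
    isSuccLimit_mul_left isSuccLimit_omega0 (zero_lt_one.trans_le le_self_add)
  have hg_card {ι : Ordinal.{u}} (hι : ι ≤ δ) : (g ι).card ≤ ρ := by
    simp only [g, card_mul, card_omega0, card_add, card_one]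
    exact mul_le_of_le hρ hρ (add_le_of_le hρ (one_le_aleph0.trans hρ)
      ((card_le_card hι).trans hδ))
  refine ⟨(clubEnum (c ∩ Ioi ρ.ord) θ ∘ g) '' Iic δ, ?_, (hF.comp hg).isClosedSet_image ?_, ?_, ?_⟩
  · rintro _ ⟨ι, hι, rfl⟩
    exact (clubEnum_mem (hc'.clubEnum_lt_of_card_lt_cof hθ ((hg_card hι).trans_lt hρθ))).1
  · intro s hs hne _
    exact csSup_le hne hs
  · rw [otype_image (hF.comp hg).strictMono, ← Iio_succ, otype_Iio]
    exact le_succ δ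
  · rintro _ ⟨ι, hι, rfl⟩
    have hmem := clubEnum_mem (hc'.clubEnum_lt_of_card_lt_cof hθ ((hg_card hι).trans_lt hρθ))
    refine ⟨hF.map_isSuccLimit (hg_lim ι), lt_of_le_of_lt ?_ hmem.2⟩
    rw [Function.comp_apply, cof_map_of_isNormal hF (hg_lim ι)]
    exact ord_le_ord.2 ((cof_le_card _).trans (hg_card hι))

end IsClubIn

theorem GlobalSquare.isSing_clubEnum_and_otype (S : GlobalSquare) {β ξ : Ordinal}
    (hβ : IsSing β) (hξ : ξ < otype (S.C β)) (hlim : IsSuccLimit ξ) :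
    IsSing (clubEnum (S.C β) β ξ) ∧ otype (S.C (clubEnum (S.C β) β ξ)) = ξ := by
  have hc := S.club β hβ
  have hlt := hc.clubEnum_lt_iff.2 hξ
  obtain ⟨hsing, hC⟩ := S.coh β hβ _ (hc.clubEnum_mem_limPts hlim hlt) hlt
  refine ⟨hsing, ?_⟩
  rw [hC, hc.inter_Iio_clubEnum hξ.le, otype_image hc.isNormal_clubEnum.strictMono, otype_Iio]

theorem IsAssocFn.exists_closed_subset {S : GlobalSquare} {ν : Ordinal → ℕ} (hν : IsAssocFn S ν)
    {δ : Ordinal} {ρ : Cardinal} (hρ : ℵ₀ ≤ ρ) (hδ : δ.card ≤ ρ) (k : ℕ) {θ : Ordinal}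
    {c : Set Ordinal} (hc : IsClubIn c θ) (hθ : succIt ρ k < θ.cof) :
    ∃ D ⊆ c, IsClosedSet D ∧ δ ≤ otype D ∧ ∀ x ∈ D, IsSing x ∧ k ≤ ν x := by
  induction k generalizing θ c with
  | zero =>
    obtain ⟨D, hDc, hD, hDδ, hDsing⟩ := hc.exists_closed_subset_isSing hρ hδ hθ
    exact ⟨D, hDc, hD, hDδ, fun x hx => ⟨hDsing x hx, Nat.zero_le _⟩⟩
  | succ k ih =>
    have hμ : (succ (succIt ρ k)).IsRegular := isRegular_succ (hρ.trans (le_succIt ρ k))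
    obtain ⟨β, hβθ, hβc, hβ, hβcof⟩ := hc.exists_mem_limPts_isSing_cof_eq hμ hθ
    have hCβ := S.club β hβ
    have hℵβ : ℵ₀ < β.cof := hβcof ▸ (hρ.trans (le_succIt ρ k)).trans_lt (lt_succ _)
    obtain ⟨E, hEe, hE, hEδ, hEsing⟩ := ih (hCβ.isClubIn_setOf_clubEnum_mem_limPts hℵβ hβc)
      (by rw [hCβ.cof_otype hβ.1, hβcof]; exact lt_succ _)
    refine ⟨clubEnum (S.C β) β '' E, ?_, hCβ.isNormal_clubEnum.isClosedSet_image hE,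
      by rwa [otype_image hCβ.isNormal_clubEnum.strictMono], ?_⟩
    · rintro _ ⟨ξ, hξ, rfl⟩
      obtain ⟨hξp, -, hlim⟩ := hEe hξ
      exact hc.mem_of_mem_limPts hlim ((hCβ.clubEnum_lt_iff.2 hξp).trans hβθ)
    · rintro _ ⟨ξ, hξ, rfl⟩
      obtain ⟨hξp, hξlim, -⟩ := hEe hξ
      obtain ⟨hsing, hot⟩ := S.isSing_clubEnum_and_otype hβ hξp hξlim
      refine ⟨hsing, ?_⟩
      rw [hν _ hsing, hot, if_pos (hEsing ξ hξ).1]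
      exact Nat.succ_le_succ (hEsing ξ hξ).2

/-- `C ∩ {β | n β ≥ k}` contains arbitrarily long closed subsets,
arbitrarily high up, for every club class `C`. -/
theorem arbitrarily_long_closed_subsets (S : GlobalSquare) (ν : Ordinal → ℕ)
    (hν : IsAssocFn S ν) (k : ℕ)
    (C : Set Ordinal) (hclosed : IsClosedSet C) (hub : ∀ η, ∃ x ∈ C, η < x)
    (δ η : Ordinal) :
    ∃ D : Set Ordinal, D ⊆ C ∩ {β | IsSing β ∧ k ≤ ν β} ∧
      IsClosedSet D ∧ δ ≤ otype D ∧ ∀ x ∈ D, η < x := by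
  set ρ := ℵ₀ ⊔ δ.card
  have hκ : (succ (succIt ρ k)).IsRegular := isRegular_succ (le_sup_left.trans (le_succIt ρ k))
  have hκlim : IsSuccLimit (succ (succIt ρ k)).ord := isSuccLimit_ord hκ.aleph0_le
  have hunbdd : ¬ BddAbove (C ∩ Ioi η) := not_bddAbove_iff.2 fun b => by
    obtain ⟨x, hx, hbx⟩ := hub (max b η)
    exact ⟨x, ⟨hx, (le_max_right b η).trans_lt hbx⟩, (le_max_left b η).trans_lt hbx⟩
  have hG := isNormal_enumOrd (hclosed.inter_Ioi η) hunbdd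
  set θ := enumOrd (C ∩ Ioi η) (succ (succIt ρ k)).ord
  have hθ : θ ∈ limPts (C ∩ Ioi η) := limPts_mono
    ((image_subset_range _ _).trans (range_enumOrd hunbdd).subset) (hG.mem_limPts_image_Iio hκlim)
  have hθcof : succIt ρ k < θ.cof := by
    rw [cof_map_of_isNormal hG hκlim, hκ.cof_ord]; exact lt_succ _
  obtain ⟨D, hDc, hD, hDδ, hDsing⟩ :=
    hν.exists_closed_subset le_sup_left le_sup_right k
      ((hclosed.inter_Ioi η).isClubIn_inter_Iio hθ) hθcof
  exact ⟨D, fun x hx => ⟨(hDc hx).1.1, hDsing x hx⟩, hD, hDδ, fun x hx => (hDc hx).1.2⟩
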